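/- arXiv:1702.06923 — 2 statements merged into one kernel-verified Lean document; each statement's English description precedes it below -/
import Mathlib

section
/- If G₁ and G₂ are finite groups, then the Schur multiplier of their direct product satisfies M(G₁ × G₂) ≅ M(G₁) × M(G₂) × (G₁^ab ⊗ G₂^ab), where G^ab denotes the abelianization and ⊗ the tensor product of abelian groups. -/
/-- The canonical presentation map `FreeGroup G →* G`. -/
def presentation (G : Type*) [Group G] : FreeGroup G →* G := FreeGroup.lift id

/-- The Schur multiplier `M(G) ≅ H₂(G, ℤ)` of a group `G`, defined via Hopf's formula
`M(G) = (R ∩ [F,F]) / [F,R]` for the free presentation `F = FreeGroup G`,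
`R = ker(F →* G)`. -/
def SchurMultiplier (G : Type*) [Group G] : Type _ :=
  ↥((presentation G).ker ⊓ commutator (FreeGroup G)) ⧸
    (⁅(⊤ : Subgroup (FreeGroup G)), (presentation G).ker⁆.subgroupOf
      ((presentation G).ker ⊓ commutator (FreeGroup G)))

noncomputable instance (G : Type*) [Group G] : Group (SchurMultiplier G) :=
  QuotientGroup.Quotient.group _

/-!
For `π : F →* G` with kernel `R`, Hopf's quotient `(R ∩ [F, F]) / [F, R]` is unchanged when
`π` is replaced by any `π' : F' →* G` admitting maps over `G` in both directions, so
`M(G₁ × G₂)` can be computed from `F = FreeGroup (G₁ ⊕ G₂) → G₁ × G₂`. Modulo `[F, R]` the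
subgroup `R` is central, which makes the commutators `[g, h]` of letters `g ∈ G₁`, `h ∈ G₂`
bimultiplicative; they give a map `G₁ᵃᵇ ⊗ G₂ᵃᵇ → M` which, together with the inclusions
`M(Gᵢ) → M`, has a left inverse built from the projections `F → FreeGroup Gᵢ` and from the map
of `F` to the Heisenberg extension of `G₁ᵃᵇ × G₂ᵃᵇ` by `G₁ᵃᵇ ⊗ G₂ᵃᵇ`, which reads `[g, h]` as
`g ⊗ h`. It is onto because the kernel of `F → FreeGroup G₁ × FreeGroup G₂` is the normal
closure of the mixed commutators, and modulo `[F, R]` that normal closure is their plain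
closure.
-/

open scoped commutatorElement

theorem Subgroup.normal_of_le_center {G : Type*} [Group G] {H : Subgroup G}
    (h : H ≤ Subgroup.center G) : H.Normal :=
  ⟨fun n hn g => by rwa [Subgroup.mem_center_iff.mp (h hn) g, mul_inv_cancel_right]⟩

section CentralCommutator

variable {G : Type*} [Group G] {a b c : G}

theorem commutatorElement_mul_left_of_mem_center (hc : c ∈ Subgroup.center G) :
    ⁅a * c, b⁆ = ⁅a, b⁆ := by
  rw [commutatorElement_mul_left_eq_conj_mul,
    commutatorElement_eq_one_iff_commute.mpr (Subgroup.mem_center_iff.mp hc b).symm,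
    mul_one, mul_inv_cancel, one_mul]

theorem commutatorElement_mul_right_of_mem_center (hc : c ∈ Subgroup.center G) :
    ⁅a, b * c⁆ = ⁅a, b⁆ := by
  rw [← inv_inj, commutatorElement_inv, commutatorElement_inv,
    commutatorElement_mul_left_of_mem_center hc]

theorem commutatorElement_mul_left_eq_mul (h : ⁅b, c⁆ ∈ Subgroup.center G) :
    ⁅a * b, c⁆ = ⁅a, c⁆ * ⁅b, c⁆ := by
  rw [commutatorElement_mul_left_eq_conj_mul, Subgroup.mem_center_iff.mp h,
    mul_inv_cancel_right, Subgroup.mem_center_iff.mp h]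

theorem commutatorElement_mul_right_eq_mul (h : ⁅a, c⁆ ∈ Subgroup.center G) :
    ⁅a, b * c⁆ = ⁅a, b⁆ * ⁅a, c⁆ := by
  rw [commutatorElement_mul_right_eq_mul_conj, mul_assoc _ b, Subgroup.mem_center_iff.mp h,
    ← mul_assoc, mul_inv_cancel_right]

end CentralCommutator

namespace FreeGroup

variable {X Y M : Type*} [Group M]

theorem commute_of_forall_commute_of (f : FreeGroup X →* M) (g : FreeGroup Y →* M)
    (h : ∀ x y, Commute (f (of x)) (g (of y))) (u : FreeGroup X) (v : FreeGroup Y) :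
    Commute (f u) (g v) := by
  induction u using FreeGroup.induction_on with
  | C1 => simp
  | of x =>
    induction v using FreeGroup.induction_on with
    | C1 => simp
    | of y => exact h x y
    | inv_of y ih => simpa using ih.inv_right
    | mul v v' ih ih' => simpa using ih.mul_right ih'
  | inv_of x ih => simpa using ih.inv_left
  | mul u u' ih ih' => simpa using ih.mul_left ih'

variable (X Y)

def sumFst : FreeGroup (X ⊕ Y) →* FreeGroup X := lift (Sum.elim of 1)

def sumSnd : FreeGroup (X ⊕ Y) →* FreeGroup Y := lift (Sum.elim 1 of)

def mixedCommutators : Set (FreeGroup (X ⊕ Y)) :=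
  Set.range fun p : X × Y => ⁅(of (Sum.inl p.1) : FreeGroup (X ⊕ Y)), of (Sum.inr p.2)⁆

@[simp] theorem sumFst_map_inl (u : FreeGroup X) : sumFst X Y (map Sum.inl u) = u :=
  DFunLike.congr_fun (ext_hom ((sumFst X Y).comp (map Sum.inl)) (MonoidHom.id _)
    fun _ => by simp [sumFst]) u

@[simp] theorem sumFst_map_inr (v : FreeGroup Y) : sumFst X Y (map Sum.inr v) = 1 :=
  DFunLike.congr_fun (ext_hom ((sumFst X Y).comp (map Sum.inr)) 1 fun _ => by simp [sumFst]) v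

@[simp] theorem sumSnd_map_inl (u : FreeGroup X) : sumSnd X Y (map Sum.inl u) = 1 :=
  DFunLike.congr_fun (ext_hom ((sumSnd X Y).comp (map Sum.inl)) 1 fun _ => by simp [sumSnd]) u

@[simp] theorem sumSnd_map_inr (v : FreeGroup Y) : sumSnd X Y (map Sum.inr v) = v :=
  DFunLike.congr_fun (ext_hom ((sumSnd X Y).comp (map Sum.inr)) (MonoidHom.id _)
    fun _ => by simp [sumSnd]) v

theorem ker_sumFst_prod_sumSnd_le :
    ((sumFst X Y).prod (sumSnd X Y)).ker ≤ Subgroup.normalClosure (mixedCommutators X Y) := by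
  set N := Subgroup.normalClosure (mixedCommutators X Y)
  set mkN := QuotientGroup.mk' N
  have hcomm := commute_of_forall_commute_of (mkN.comp (map Sum.inl)) (mkN.comp (map Sum.inr))
    fun x y => by
      rw [← commutatorElement_eq_one_iff_commute, MonoidHom.comp_apply, MonoidHom.comp_apply,
        map.of, map.of, ← map_commutatorElement, QuotientGroup.mk'_apply,
        QuotientGroup.eq_one_iff]
      exact Subgroup.subset_normalClosure ⟨(x, y), rfl⟩
  have hsplit : (MonoidHom.noncommCoprod _ _ hcomm).comp ((sumFst X Y).prod (sumSnd X Y)) = mkN :=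
    ext_hom _ _ fun z => by cases z <;> simp [sumFst, sumSnd, mkN]
  intro x hx
  have : mkN x = 1 := by rw [← hsplit, MonoidHom.comp_apply, hx, _root_.map_one]
  rwa [QuotientGroup.mk'_apply, QuotientGroup.eq_one_iff] at this

end FreeGroup

theorem MonoidHom.ker_le_comap_ker_of_comp_eq {F G F' G' : Type*} [Group F] [Group G]
    [Group F'] [Group G'] {π : F →* G} {π' : F' →* G'} {α : F →* F'} {β : G →* G'}
    (h : π'.comp α = β.comp π) : π.ker ≤ π'.ker.comap α := fun x hx => by
  rw [Subgroup.mem_comap, MonoidHom.mem_ker, ← MonoidHom.comp_apply, h, MonoidHom.comp_apply,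
    MonoidHom.mem_ker.mp hx, map_one]

section Hopf

variable {F G F' G' F'' G'' : Type*} [Group F] [Group G] [Group F'] [Group G'] [Group F'']
  [Group G''] (π : F →* G) (π' : F' →* G') (π'' : F'' →* G'')

def hopfNum : Subgroup F := π.ker ⊓ commutator F

def hopfDen : Subgroup F := ⁅(⊤ : Subgroup F), π.ker⁆

instance : (hopfDen π).Normal := by
  unfold hopfDen; infer_instance

abbrev HopfQuotient : Type _ := ↥(hopfNum π) ⧸ (hopfDen π).subgroupOf (hopfNum π)

theorem hopfDen_le_ker {E : Type*} [Group E] (ψ : F →* E)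
    (h : ∀ r ∈ π.ker, ψ r ∈ Subgroup.center E) : hopfDen π ≤ ψ.ker := by
  rw [hopfDen, Subgroup.commutator_le]
  intro f _ r hr
  rw [MonoidHom.mem_ker, map_commutatorElement, commutatorElement_eq_one_iff_commute]
  exact Subgroup.mem_center_iff.mp (h r hr) (ψ f)

theorem coe_mem_center_of_mem_ker {r : F} (hr : r ∈ π.ker) :
    (r : F ⧸ hopfDen π) ∈ Subgroup.center (F ⧸ hopfDen π) := by
  suffices π.ker.map (QuotientGroup.mk' (hopfDen π)) ≤ Subgroup.center _ from
    this ⟨r, hr, rfl⟩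
  rw [← Subgroup.commutator_top_left_eq_bot_iff_le_center,
    ← Subgroup.map_top_of_surjective _ (QuotientGroup.mk'_surjective _),
    ← Subgroup.map_commutator]
  exact QuotientGroup.map_mk'_self _

theorem exists_coe_eq_mul_of_map_eq {f f' : F} (h : π f = π f') :
    ∃ c ∈ Subgroup.center (F ⧸ hopfDen π), (f' : F ⧸ hopfDen π) = f * c :=
  ⟨_, coe_mem_center_of_mem_ker π (r := f⁻¹ * f') (by simp [h]),
    by rw [← QuotientGroup.mk_mul, mul_inv_cancel_left]⟩

theorem coe_commutatorElement_of_map_eq_mul_left {u u' v w : F} (hw : π w = π (u * u'))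
    (h : ⁅u', v⁆ ∈ π.ker) :
    ((⁅w, v⁆ : F) : F ⧸ hopfDen π) = (⁅u, v⁆ * ⁅u', v⁆ : F) := by
  obtain ⟨c, hc, hwc⟩ := exists_coe_eq_mul_of_map_eq π hw.symm
  have hu'v := coe_mem_center_of_mem_ker π h
  simp only [← QuotientGroup.mk'_apply, map_commutatorElement] at hwc hu'v ⊢
  rw [hwc, commutatorElement_mul_left_of_mem_center hc, map_mul,
    commutatorElement_mul_left_eq_mul hu'v, map_mul, map_commutatorElement,
    map_commutatorElement]

theorem coe_commutatorElement_of_map_eq_mul_right {u v v' w : F} (hw : π w = π (v * v'))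
    (h : ⁅u, v'⁆ ∈ π.ker) :
    ((⁅u, w⁆ : F) : F ⧸ hopfDen π) = (⁅u, v⁆ * ⁅u, v'⁆ : F) := by
  obtain ⟨c, hc, hwc⟩ := exists_coe_eq_mul_of_map_eq π hw.symm
  have huv' := coe_mem_center_of_mem_ker π h
  simp only [← QuotientGroup.mk'_apply, map_commutatorElement] at hwc huv' ⊢
  rw [hwc, commutatorElement_mul_right_of_mem_center hc, map_mul,
    commutatorElement_mul_right_eq_mul huv', map_mul, map_commutatorElement,
    map_commutatorElement]

theorem map_normalClosure_eq_map_closure {S : Set F} (hS : S ⊆ π.ker) :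
    (Subgroup.normalClosure S).map (QuotientGroup.mk' (hopfDen π)) =
      (Subgroup.closure S).map (QuotientGroup.mk' (hopfDen π)) := by
  have hcenter : Subgroup.closure (QuotientGroup.mk' (hopfDen π) '' S) ≤ Subgroup.center _ :=
    (Subgroup.closure_le _).mpr fun _ ⟨s, hs, hs'⟩ =>
      hs' ▸ coe_mem_center_of_mem_ker π (hS hs)
  have := Subgroup.normal_of_le_center hcenter
  rw [Subgroup.map_normalClosure _ _ (QuotientGroup.mk'_surjective _), MonoidHom.map_closure]
  exact le_antisymm (Subgroup.normalClosure_le_normal Subgroup.subset_closure)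
    Subgroup.closure_le_normalClosure

namespace HopfQuotient

def mk (x : F) (hx : x ∈ hopfNum π) : HopfQuotient π := QuotientGroup.mk ⟨x, hx⟩

variable {π π' π''}

@[elab_as_elim]
theorem induction_on {p : HopfQuotient π → Prop} (q : HopfQuotient π)
    (h : ∀ x hx, p (mk π x hx)) : p q :=
  QuotientGroup.induction_on q fun x => h x.1 x.2

theorem mk_mul {x y : F} (hx : x ∈ hopfNum π) (hy : y ∈ hopfNum π) :
    mk π (x * y) (mul_mem hx hy) = mk π x hx * mk π y hy := rfl

theorem mk_eq_mk_iff {x y : F} (hx : x ∈ hopfNum π) (hy : y ∈ hopfNum π) :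
    mk π x hx = mk π y hy ↔ (x : F ⧸ hopfDen π) = y := by
  rw [mk, mk, QuotientGroup.eq, Subgroup.mem_subgroupOf, QuotientGroup.eq]
  rfl

theorem mk_eq_one_iff {x : F} (hx : x ∈ hopfNum π) : mk π x hx = 1 ↔ x ∈ hopfDen π := by
  rw [mk, QuotientGroup.eq_one_iff, Subgroup.mem_subgroupOf]

instance : CommGroup (HopfQuotient π) where
  mul_comm q q' := by
    induction q using induction_on with | h x hx =>
    induction q' using induction_on with | h y hy =>
    rw [← mk_mul, ← mk_mul, mk_eq_mk_iff, QuotientGroup.mk_mul, QuotientGroup.mk_mul]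
    exact Subgroup.mem_center_iff.mp (coe_mem_center_of_mem_ker π hy.1) _

variable {α : F →* F'}

theorem map_hopfNum_le (h : π.ker ≤ π'.ker.comap α) : (hopfNum π).map α ≤ hopfNum π' := by
  rw [hopfNum, hopfNum]
  refine le_inf ((Subgroup.map_mono inf_le_left).trans (Subgroup.map_le_iff_le_comap.mpr h)) ?_
  refine (Subgroup.map_mono inf_le_right).trans ?_
  rw [commutator_def, Subgroup.map_commutator]
  exact Subgroup.commutator_mono le_top le_top

theorem map_hopfDen_le (h : π.ker ≤ π'.ker.comap α) : (hopfDen π).map α ≤ hopfDen π' := by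
  rw [hopfDen, hopfDen, Subgroup.map_commutator]
  exact Subgroup.commutator_mono le_top (Subgroup.map_le_iff_le_comap.mpr h)

variable (π π' α) in
def map (h : π.ker ≤ π'.ker.comap α) : HopfQuotient π →* HopfQuotient π' :=
  QuotientGroup.map _ _ ((α.comp (hopfNum π).subtype).codRestrict (hopfNum π')
      fun x => map_hopfNum_le h ⟨x, x.2, rfl⟩)
    fun x hx => map_hopfDen_le h ⟨x, hx, rfl⟩

theorem map_mk (h : π.ker ≤ π'.ker.comap α) {x : F} (hx : x ∈ hopfNum π) :
    map π π' α h (mk π x hx) = mk π' (α x) (map_hopfNum_le h ⟨x, hx, rfl⟩) := rfl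

theorem map_map {β : F' →* F''} (h : π.ker ≤ π'.ker.comap α)
    (h' : π'.ker ≤ π''.ker.comap β) (q : HopfQuotient π) :
    map π' π'' β h' (map π π' α h q) =
      map π π'' (β.comp α) (fun _ hx => h' (h hx)) q := by
  induction q using induction_on with | h x hx => rfl

variable (π) in
theorem map_eq_id {α : F →* F} (hα : π.comp α = π) (h : π.ker ≤ π.ker.comap α) :
    map π π α h = MonoidHom.id _ := by
  -- `α` moves every element by a factor from `R`, which is central modulo `[F, R]`.
  have hcomm : commutator F ≤
      MonoidHom.eqLocus ((QuotientGroup.mk' (hopfDen π)).comp α) (QuotientGroup.mk' _) := by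
    rw [commutator_def, Subgroup.commutator_le]
    intro a _ b _
    have hfix : ∀ f, π f = π (α f) := fun f => (DFunLike.congr_fun hα f).symm
    obtain ⟨c, hc, hac⟩ := exists_coe_eq_mul_of_map_eq π (hfix a)
    obtain ⟨d, hd, hbd⟩ := exists_coe_eq_mul_of_map_eq π (hfix b)
    change QuotientGroup.mk' _ (α ⁅a, b⁆) = QuotientGroup.mk' _ ⁅a, b⁆
    simp only [map_commutatorElement, QuotientGroup.mk'_apply, hac, hbd]
    rw [commutatorElement_mul_left_of_mem_center hc, commutatorElement_mul_right_of_mem_center hd]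
  refine MonoidHom.ext fun q => ?_
  induction q using induction_on with | h x hx =>
  exact (mk_eq_mk_iff _ hx).mpr (hcomm hx.2)

theorem map_eq_one (hα : α = 1) (h : π.ker ≤ π'.ker.comap α) : map π π' α h = 1 := by
  subst hα
  refine MonoidHom.ext fun q => ?_
  induction q using induction_on with | h x hx =>
  exact (mk_eq_one_iff _).mpr (one_mem _)

def congr (π : F →* G) (π' : F' →* G) (α : F →* F') (β : F' →* F)
    (hα : π'.comp α = π) (hβ : π.comp β = π') : HopfQuotient π ≃* HopfQuotient π' :=
  have hα' := MonoidHom.ker_le_comap_ker_of_comp_eq (β := MonoidHom.id G) hα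
  have hβ' := MonoidHom.ker_le_comap_ker_of_comp_eq (β := MonoidHom.id G) hβ
  MonoidHom.toMulEquiv (map π π' α hα') (map π' π β hβ')
    (MonoidHom.ext fun q => (map_map hα' hβ' q).trans <| DFunLike.congr_fun
      (map_eq_id π (by rw [← MonoidHom.comp_assoc, hβ, hα]) _) q)
    (MonoidHom.ext fun q => (map_map hβ' hα' q).trans <| DFunLike.congr_fun
      (map_eq_id π' (by rw [← MonoidHom.comp_assoc, hα, hβ]) _) q)

end HopfQuotient

end Hopf

abbrev AbelianizationTensor (G₁ G₂ : Type*) [Group G₁] [Group G₂] : Type _ :=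
  TensorProduct ℤ (Additive (Abelianization G₁)) (Additive (Abelianization G₂))

namespace Abelianization

variable {G₁ G₂ M A : Type*} [Group G₁] [Group G₂] [Monoid M] [CommGroup A]

theorem of_surjective : Function.Surjective (of : G₁ →* Abelianization G₁) :=
  fun a => QuotientGroup.induction_on a fun g => ⟨g, rfl⟩

theorem tensor_hom_ext {φ ψ : Multiplicative (AbelianizationTensor G₁ G₂) →* M}
    (h : ∀ g₁ g₂, φ (.ofAdd (.ofMul (of g₁) ⊗ₜ .ofMul (of g₂))) =
      ψ (.ofAdd (.ofMul (of g₁) ⊗ₜ .ofMul (of g₂)))) : φ = ψ := by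
  refine MonoidHom.ext fun t => ?_
  induction t using TensorProduct.induction_on with
  | zero => exact φ.map_one.trans ψ.map_one.symm
  | tmul a b =>
    obtain ⟨g₁, rfl⟩ := of_surjective a.toMul
    obtain ⟨g₂, rfl⟩ := of_surjective b.toMul
    exact h g₁ g₂
  | add t t' ht ht' =>
    exact (φ.map_mul t t').trans ((congrArg₂ _ ht ht').trans (ψ.map_mul t t').symm)

def tensorLift (f : G₁ → G₂ → A) (hl : ∀ g g' h, f (g * g') h = f g h * f g' h)
    (hr : ∀ g h h', f g (h * h') = f g h * f g h') :
    Multiplicative (AbelianizationTensor G₁ G₂) →* A :=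
  let f' : Abelianization G₁ →* Abelianization G₂ →* A := lift <|
    MonoidHom.mk' (fun g => lift (MonoidHom.mk' (f g) (hr g)))
      fun g g' => hom_ext _ _ (MonoidHom.ext fun h => hl g g' h)
  AddMonoidHom.toMultiplicativeLeft <| TensorProduct.liftAddHom
    (AddMonoidHom.mk' (fun a => MonoidHom.toAdditive (f' a.toMul))
      fun a a' => AddMonoidHom.ext fun b => by simp)
    fun n a b => by rw [map_zsmul, AddMonoidHom.smul_apply, ← map_zsmul]

theorem tensorLift_tmul (f : G₁ → G₂ → A) (hl : ∀ g g' h, f (g * g') h = f g h * f g' h)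
    (hr : ∀ g h h', f g (h * h') = f g h * f g h') (g₁ : G₁) (g₂ : G₂) :
    tensorLift f hl hr (.ofAdd (.ofMul (of g₁) ⊗ₜ .ofMul (of g₂))) = f g₁ g₂ := rfl

end Abelianization

/-- The central extension of `A × B` by `A ⊗ B` with cocycle `(x, y) ↦ x.left ⊗ y.right`. -/
@[ext]
structure Heisenberg (A B : Type*) [CommGroup A] [CommGroup B] where
  left : A
  right : B
  central : TensorProduct ℤ (Additive A) (Additive B)

namespace Heisenberg

variable {A B : Type*} [CommGroup A] [CommGroup B]

instance : Mul (Heisenberg A B) :=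
  ⟨fun x y => ⟨x.left * y.left, x.right * y.right,
    x.central + y.central + .ofMul x.left ⊗ₜ .ofMul y.right⟩⟩

instance : One (Heisenberg A B) := ⟨⟨1, 1, 0⟩⟩

instance : Inv (Heisenberg A B) :=
  ⟨fun x => ⟨x.left⁻¹, x.right⁻¹, -x.central + .ofMul x.left ⊗ₜ .ofMul x.right⟩⟩

@[simp] theorem left_mul (x y : Heisenberg A B) : (x * y).left = x.left * y.left := rfl
@[simp] theorem right_mul (x y : Heisenberg A B) : (x * y).right = x.right * y.right := rfl
@[simp] theorem central_mul (x y : Heisenberg A B) :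
    (x * y).central = x.central + y.central + .ofMul x.left ⊗ₜ .ofMul y.right := rfl
@[simp] theorem left_one : (1 : Heisenberg A B).left = 1 := rfl
@[simp] theorem right_one : (1 : Heisenberg A B).right = 1 := rfl
@[simp] theorem central_one : (1 : Heisenberg A B).central = 0 := rfl
@[simp] theorem left_inv (x : Heisenberg A B) : x⁻¹.left = x.left⁻¹ := rfl
@[simp] theorem right_inv (x : Heisenberg A B) : x⁻¹.right = x.right⁻¹ := rfl
@[simp] theorem central_inv (x : Heisenberg A B) :
    x⁻¹.central = -x.central + .ofMul x.left ⊗ₜ .ofMul x.right := rfl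

instance : Group (Heisenberg A B) :=
  Group.ofLeftAxioms
    (fun x y z => by
      ext <;> simp only [left_mul, right_mul, central_mul, mul_assoc, ofMul_mul,
        TensorProduct.add_tmul, TensorProduct.tmul_add]
      abel)
    (fun x => by ext <;> simp)
    (fun x => by ext <;> simp [TensorProduct.neg_tmul])

def inl : A →* Heisenberg A B where
  toFun a := ⟨a, 1, 0⟩
  map_one' := rfl
  map_mul' a a' := by ext <;> simp

def inr : B →* Heisenberg A B where
  toFun b := ⟨1, b, 0⟩
  map_one' := rfl
  map_mul' b b' := by ext <;> simp

def leftHom : Heisenberg A B →* A where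
  toFun := left
  map_one' := rfl
  map_mul' _ _ := rfl

def rightHom : Heisenberg A B →* B where
  toFun := right
  map_one' := rfl
  map_mul' _ _ := rfl

@[simp] theorem leftHom_apply (x : Heisenberg A B) : leftHom x = x.left := rfl
@[simp] theorem rightHom_apply (x : Heisenberg A B) : rightHom x = x.right := rfl
@[simp] theorem inl_apply (a : A) : (inl a : Heisenberg A B) = ⟨a, 1, 0⟩ := rfl
@[simp] theorem inr_apply (b : B) : (inr b : Heisenberg A B) = ⟨1, b, 0⟩ := rfl

theorem mem_center {x : Heisenberg A B} (hl : x.left = 1) (hr : x.right = 1) :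
    x ∈ Subgroup.center (Heisenberg A B) :=
  Subgroup.mem_center_iff.mpr fun y => by ext <;> simp [hl, hr, mul_comm, add_comm]

theorem central_mul_of_left_eq_one {x : Heisenberg A B} (hx : x.left = 1) (y : Heisenberg A B) :
    (x * y).central = x.central + y.central := by
  simp [hx]

theorem commutatorElement_inl_inr (a : A) (b : B) :
    ⁅(inl a : Heisenberg A B), inr b⁆ = ⟨1, 1, .ofMul a ⊗ₜ .ofMul b⟩ := by
  ext <;> simp [commutatorElement_def]

end Heisenberg

namespace SchurMultiplier

open HopfQuotient
open FreeGroup (of ext_hom sumFst sumSnd mixedCommutators)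

variable (G₁ G₂ : Type*) [Group G₁] [Group G₂]

def sumPresentation : FreeGroup (G₁ ⊕ G₂) →* G₁ × G₂ :=
  FreeGroup.lift (Sum.elim (MonoidHom.inl G₁ G₂) (MonoidHom.inr G₁ G₂))

theorem sumPresentation_comp_map_inl :
    (sumPresentation G₁ G₂).comp (FreeGroup.map Sum.inl) =
      (MonoidHom.inl G₁ G₂).comp (presentation G₁) :=
  ext_hom _ _ fun _ => by simp [sumPresentation, presentation]

theorem sumPresentation_comp_map_inr :
    (sumPresentation G₁ G₂).comp (FreeGroup.map Sum.inr) =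
      (MonoidHom.inr G₁ G₂).comp (presentation G₂) :=
  ext_hom _ _ fun _ => by simp [sumPresentation, presentation]

theorem presentation_comp_sumFst :
    (presentation G₁).comp (sumFst G₁ G₂) =
      (MonoidHom.fst G₁ G₂).comp (sumPresentation G₁ G₂) :=
  ext_hom _ _ fun x => by cases x <;> simp [sumFst, sumPresentation, presentation]

theorem presentation_comp_sumSnd :
    (presentation G₂).comp (sumSnd G₁ G₂) =
      (MonoidHom.snd G₁ G₂).comp (sumPresentation G₁ G₂) :=
  ext_hom _ _ fun x => by cases x <;> simp [sumSnd, sumPresentation, presentation]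

noncomputable def prodEquivHopfQuotient :
    SchurMultiplier (G₁ × G₂) ≃* HopfQuotient (sumPresentation G₁ G₂) :=
  HopfQuotient.congr _ _ (FreeGroup.lift fun p => of (Sum.inl p.1) * of (Sum.inr p.2))
    (FreeGroup.map (Sum.elim (fun g => (g, 1)) (fun h => (1, h))))
    (ext_hom _ _ fun _ => by simp [sumPresentation, presentation])
    (ext_hom _ _ fun x => by cases x <;> simp [sumPresentation, presentation])

noncomputable def inclLeft :
    HopfQuotient (presentation G₁) →* HopfQuotient (sumPresentation G₁ G₂) :=
  HopfQuotient.map _ _ (FreeGroup.map Sum.inl)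
    (MonoidHom.ker_le_comap_ker_of_comp_eq (sumPresentation_comp_map_inl G₁ G₂))

noncomputable def inclRight :
    HopfQuotient (presentation G₂) →* HopfQuotient (sumPresentation G₁ G₂) :=
  HopfQuotient.map _ _ (FreeGroup.map Sum.inr)
    (MonoidHom.ker_le_comap_ker_of_comp_eq (sumPresentation_comp_map_inr G₁ G₂))

noncomputable def projLeft :
    HopfQuotient (sumPresentation G₁ G₂) →* HopfQuotient (presentation G₁) :=
  HopfQuotient.map _ _ (sumFst G₁ G₂)
    (MonoidHom.ker_le_comap_ker_of_comp_eq (presentation_comp_sumFst G₁ G₂))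

noncomputable def projRight :
    HopfQuotient (sumPresentation G₁ G₂) →* HopfQuotient (presentation G₂) :=
  HopfQuotient.map _ _ (sumSnd G₁ G₂)
    (MonoidHom.ker_le_comap_ker_of_comp_eq (presentation_comp_sumSnd G₁ G₂))

@[simp] theorem projLeft_inclLeft (q : HopfQuotient (presentation G₁)) :
    projLeft G₁ G₂ (inclLeft G₁ G₂ q) = q :=
  (map_map _ _ q).trans <| DFunLike.congr_fun
    (map_eq_id _ (MonoidHom.ext fun _ => by simp) _) q

@[simp] theorem projRight_inclRight (q : HopfQuotient (presentation G₂)) :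
    projRight G₁ G₂ (inclRight G₁ G₂ q) = q :=
  (map_map _ _ q).trans <| DFunLike.congr_fun
    (map_eq_id _ (MonoidHom.ext fun _ => by simp) _) q

@[simp] theorem projLeft_inclRight (q : HopfQuotient (presentation G₂)) :
    projLeft G₁ G₂ (inclRight G₁ G₂ q) = 1 :=
  (map_map _ _ q).trans <| DFunLike.congr_fun (map_eq_one (MonoidHom.ext fun _ => by simp) _) q

@[simp] theorem projRight_inclLeft (q : HopfQuotient (presentation G₁)) :
    projRight G₁ G₂ (inclLeft G₁ G₂ q) = 1 :=
  (map_map _ _ q).trans <| DFunLike.congr_fun (map_eq_one (MonoidHom.ext fun _ => by simp) _) q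

theorem mixedCommutators_subset_hopfNum :
    mixedCommutators G₁ G₂ ⊆ hopfNum (sumPresentation G₁ G₂) := by
  rintro _ ⟨⟨g, h⟩, rfl⟩
  refine ⟨?_, Subgroup.commutator_mem_commutator trivial trivial⟩
  simp [sumPresentation, commutatorElement_def]

noncomputable def commutatorClass (g : G₁) (h : G₂) :
    HopfQuotient (sumPresentation G₁ G₂) :=
  mk _ _ (mixedCommutators_subset_hopfNum G₁ G₂ ⟨(g, h), rfl⟩)

theorem commutatorClass_mul_left (g g' : G₁) (h : G₂) :
    commutatorClass G₁ G₂ (g * g') h =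
      commutatorClass G₁ G₂ g h * commutatorClass G₁ G₂ g' h := by
  rw [commutatorClass, commutatorClass, commutatorClass, ← mk_mul, mk_eq_mk_iff]
  exact coe_commutatorElement_of_map_eq_mul_left _ (by simp [sumPresentation])
    (mixedCommutators_subset_hopfNum G₁ G₂ ⟨(g', h), rfl⟩).1

theorem commutatorClass_mul_right (g : G₁) (h h' : G₂) :
    commutatorClass G₁ G₂ g (h * h') =
      commutatorClass G₁ G₂ g h * commutatorClass G₁ G₂ g h' := by
  rw [commutatorClass, commutatorClass, commutatorClass, ← mk_mul, mk_eq_mk_iff]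
  exact coe_commutatorElement_of_map_eq_mul_right _ (by simp [sumPresentation])
    (mixedCommutators_subset_hopfNum G₁ G₂ ⟨(g, h'), rfl⟩).1

noncomputable def tensorToHopf :
    Multiplicative (AbelianizationTensor G₁ G₂) →* HopfQuotient (sumPresentation G₁ G₂) :=
  Abelianization.tensorLift (commutatorClass G₁ G₂) (commutatorClass_mul_left G₁ G₂)
    (commutatorClass_mul_right G₁ G₂)

theorem tensorToHopf_tmul (g : G₁) (h : G₂) :
    tensorToHopf G₁ G₂
        (.ofAdd (.ofMul (Abelianization.of g) ⊗ₜ .ofMul (Abelianization.of h))) =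
      commutatorClass G₁ G₂ g h :=
  Abelianization.tensorLift_tmul _ _ _ g h

theorem exists_tensorToHopf_eq_mk {c : FreeGroup (G₁ ⊕ G₂)}
    (hc : c ∈ Subgroup.closure (mixedCommutators G₁ G₂)) :
    ∃ t, tensorToHopf G₁ G₂ t =
      mk _ c ((Subgroup.closure_le _).mpr (mixedCommutators_subset_hopfNum G₁ G₂) hc) := by
  induction hc using Subgroup.closure_induction with
  | mem _ hs =>
    obtain ⟨⟨g, h⟩, rfl⟩ := hs
    exact ⟨_, tensorToHopf_tmul G₁ G₂ g h⟩
  | one => exact ⟨1, map_one _⟩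
  | mul _ _ _ _ ih ih' =>
    obtain ⟨t, ht⟩ := ih
    obtain ⟨t', ht'⟩ := ih'
    exact ⟨t * t', by rw [map_mul, ht, ht', ← mk_mul]⟩
  | inv _ _ ih =>
    obtain ⟨t, ht⟩ := ih
    exact ⟨t⁻¹, by rw [map_inv, ht]; rfl⟩

@[simp] theorem projLeft_tensorToHopf (t : Multiplicative (AbelianizationTensor G₁ G₂)) :
    projLeft G₁ G₂ (tensorToHopf G₁ G₂ t) = 1 := by
  refine DFunLike.congr_fun (Abelianization.tensor_hom_ext
    (φ := (projLeft G₁ G₂).comp (tensorToHopf G₁ G₂)) (ψ := 1) fun g h => ?_) t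
  rw [MonoidHom.comp_apply, MonoidHom.one_apply, tensorToHopf_tmul, commutatorClass, projLeft,
    map_mk, mk_eq_one_iff, map_commutatorElement]
  simp [sumFst]

@[simp] theorem projRight_tensorToHopf (t : Multiplicative (AbelianizationTensor G₁ G₂)) :
    projRight G₁ G₂ (tensorToHopf G₁ G₂ t) = 1 := by
  refine DFunLike.congr_fun (Abelianization.tensor_hom_ext
    (φ := (projRight G₁ G₂).comp (tensorToHopf G₁ G₂)) (ψ := 1) fun g h => ?_) t
  rw [MonoidHom.comp_apply, MonoidHom.one_apply, tensorToHopf_tmul, commutatorClass, projRight,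
    map_mk, mk_eq_one_iff, map_commutatorElement]
  simp [sumSnd]

noncomputable def heisenbergLift :
    FreeGroup (G₁ ⊕ G₂) →* Heisenberg (Abelianization G₁) (Abelianization G₂) :=
  FreeGroup.lift (Sum.elim (Heisenberg.inl.comp Abelianization.of)
    (Heisenberg.inr.comp Abelianization.of))

theorem leftHom_comp_heisenbergLift :
    Heisenberg.leftHom.comp (heisenbergLift G₁ G₂) =
      Abelianization.of.comp ((MonoidHom.fst G₁ G₂).comp (sumPresentation G₁ G₂)) :=
  ext_hom _ _ fun x => by cases x <;> simp [heisenbergLift, sumPresentation]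

theorem rightHom_comp_heisenbergLift :
    Heisenberg.rightHom.comp (heisenbergLift G₁ G₂) =
      Abelianization.of.comp ((MonoidHom.snd G₁ G₂).comp (sumPresentation G₁ G₂)) :=
  ext_hom _ _ fun x => by cases x <;> simp [heisenbergLift, sumPresentation]

theorem heisenbergLift_left_eq_one {r : FreeGroup (G₁ ⊕ G₂)}
    (hr : r ∈ (sumPresentation G₁ G₂).ker) : (heisenbergLift G₁ G₂ r).left = 1 := by
  simpa [MonoidHom.mem_ker.mp hr] using
    DFunLike.congr_fun (leftHom_comp_heisenbergLift G₁ G₂) r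

theorem heisenbergLift_right_eq_one {r : FreeGroup (G₁ ⊕ G₂)}
    (hr : r ∈ (sumPresentation G₁ G₂).ker) : (heisenbergLift G₁ G₂ r).right = 1 := by
  simpa [MonoidHom.mem_ker.mp hr] using
    DFunLike.congr_fun (rightHom_comp_heisenbergLift G₁ G₂) r

noncomputable def hopfToTensor :
    HopfQuotient (sumPresentation G₁ G₂) →* Multiplicative (AbelianizationTensor G₁ G₂) :=
  QuotientGroup.lift _
    (MonoidHom.mk' (fun x => .ofAdd (heisenbergLift G₁ G₂ x).central) fun x y => by
      simp only [Subgroup.coe_mul, map_mul,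
        Heisenberg.central_mul_of_left_eq_one (heisenbergLift_left_eq_one G₁ G₂ x.2.1)]
      rfl)
    fun x hx => by
      have hψ : heisenbergLift G₁ G₂ x = 1 := hopfDen_le_ker _ _ (fun r hr =>
        Heisenberg.mem_center (heisenbergLift_left_eq_one G₁ G₂ hr)
          (heisenbergLift_right_eq_one G₁ G₂ hr)) ((Subgroup.mem_subgroupOf).mp hx)
      simp [hψ]

theorem hopfToTensor_mk {x : FreeGroup (G₁ ⊕ G₂)}
    (hx : x ∈ hopfNum (sumPresentation G₁ G₂)) :
    hopfToTensor G₁ G₂ (mk _ x hx) = .ofAdd (heisenbergLift G₁ G₂ x).central := rfl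

@[simp] theorem hopfToTensor_inclLeft (q : HopfQuotient (presentation G₁)) :
    hopfToTensor G₁ G₂ (inclLeft G₁ G₂ q) = 1 := by
  induction q using induction_on with | h x hx =>
  have : (heisenbergLift G₁ G₂).comp (FreeGroup.map Sum.inl) =
      Heisenberg.inl.comp (Abelianization.of.comp (presentation G₁)) :=
    ext_hom _ _ fun _ => by simp [heisenbergLift, presentation]
  rw [inclLeft, map_mk, hopfToTensor_mk, ← MonoidHom.comp_apply, this]
  rfl

@[simp] theorem hopfToTensor_inclRight (q : HopfQuotient (presentation G₂)) :
    hopfToTensor G₁ G₂ (inclRight G₁ G₂ q) = 1 := by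
  induction q using induction_on with | h x hx =>
  have : (heisenbergLift G₁ G₂).comp (FreeGroup.map Sum.inr) =
      Heisenberg.inr.comp (Abelianization.of.comp (presentation G₂)) :=
    ext_hom _ _ fun _ => by simp [heisenbergLift, presentation]
  rw [inclRight, map_mk, hopfToTensor_mk, ← MonoidHom.comp_apply, this]
  rfl

@[simp] theorem hopfToTensor_tensorToHopf (t : Multiplicative (AbelianizationTensor G₁ G₂)) :
    hopfToTensor G₁ G₂ (tensorToHopf G₁ G₂ t) = t := by
  refine DFunLike.congr_fun (Abelianization.tensor_hom_ext
    (φ := (hopfToTensor G₁ G₂).comp (tensorToHopf G₁ G₂)) (ψ := MonoidHom.id _)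
    fun g h => ?_) t
  have hl : heisenbergLift G₁ G₂ (of (Sum.inl g)) = Heisenberg.inl (Abelianization.of g) := by
    simp [heisenbergLift]
  have hr : heisenbergLift G₁ G₂ (of (Sum.inr h)) = Heisenberg.inr (Abelianization.of h) := by
    simp [heisenbergLift]
  rw [MonoidHom.comp_apply, tensorToHopf_tmul, commutatorClass, hopfToTensor_mk,
    map_commutatorElement, hl, hr, Heisenberg.commutatorElement_inl_inr]
  rfl

noncomputable def toHopf : HopfQuotient (presentation G₁) × HopfQuotient (presentation G₂) ×
    Multiplicative (AbelianizationTensor G₁ G₂) →* HopfQuotient (sumPresentation G₁ G₂) :=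
  (inclLeft G₁ G₂).coprod ((inclRight G₁ G₂).coprod (tensorToHopf G₁ G₂))

noncomputable def ofHopf : HopfQuotient (sumPresentation G₁ G₂) →*
    HopfQuotient (presentation G₁) × HopfQuotient (presentation G₂) ×
      Multiplicative (AbelianizationTensor G₁ G₂) :=
  (projLeft G₁ G₂).prod ((projRight G₁ G₂).prod (hopfToTensor G₁ G₂))

theorem ofHopf_toHopf : Function.LeftInverse (ofHopf G₁ G₂) (toHopf G₁ G₂) := by
  rintro ⟨q₁, q₂, t⟩
  simp [ofHopf, toHopf]

theorem toHopf_surjective : Function.Surjective (toHopf G₁ G₂) := by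
  intro q
  induction q using induction_on with | h x hx =>
  have hx₁ := map_hopfNum_le (MonoidHom.ker_le_comap_ker_of_comp_eq
    (presentation_comp_sumFst G₁ G₂)) ⟨x, hx, rfl⟩
  have hx₂ := map_hopfNum_le (MonoidHom.ker_le_comap_ker_of_comp_eq
    (presentation_comp_sumSnd G₁ G₂)) ⟨x, hx, rfl⟩
  set y := FreeGroup.map Sum.inl (sumFst G₁ G₂ x) * FreeGroup.map Sum.inr (sumSnd G₁ G₂ x)
  have hy : y⁻¹ * x ∈ ((sumFst G₁ G₂).prod (sumSnd G₁ G₂)).ker := by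
    simp [y, MonoidHom.mem_ker, Prod.ext_iff]
  obtain ⟨c, hc, hyc⟩ : QuotientGroup.mk' _ (y⁻¹ * x) ∈
      (Subgroup.closure (mixedCommutators G₁ G₂)).map (QuotientGroup.mk' (hopfDen _)) := by
    rw [← map_normalClosure_eq_map_closure _ fun s hs =>
      (mixedCommutators_subset_hopfNum G₁ G₂ hs).1]
    exact ⟨_, FreeGroup.ker_sumFst_prod_sumSnd_le G₁ G₂ hy, rfl⟩
  obtain ⟨t, ht⟩ := exists_tensorToHopf_eq_mk G₁ G₂ hc
  refine ⟨(mk _ _ hx₁, mk _ _ hx₂, t), ?_⟩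
  rw [toHopf, MonoidHom.coprod_apply, MonoidHom.coprod_apply, ht, inclLeft, inclRight, map_mk,
    map_mk, ← mul_assoc, ← mk_mul, ← mk_mul, mk_eq_mk_iff]
  change ((y * c : FreeGroup (G₁ ⊕ G₂)) : FreeGroup (G₁ ⊕ G₂) ⧸ hopfDen _) = x
  rw [QuotientGroup.mk_mul, ← QuotientGroup.mk'_apply _ c, hyc, QuotientGroup.mk'_apply,
    ← QuotientGroup.mk_mul, mul_inv_cancel_left]

end SchurMultiplier

theorem schur_multiplier_of_direct_product_general (G₁ G₂ : Type*) [Group G₁] [Group G₂] :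
    Nonempty (SchurMultiplier (G₁ × G₂) ≃*
      SchurMultiplier G₁ × SchurMultiplier G₂ ×
        Multiplicative (TensorProduct ℤ (Additive (Abelianization G₁))
          (Additive (Abelianization G₂)))) :=
  ⟨(SchurMultiplier.prodEquivHopfQuotient G₁ G₂).trans
    (MulEquiv.ofBijective (SchurMultiplier.toHopf G₁ G₂)
      ⟨(SchurMultiplier.ofHopf_toHopf G₁ G₂).injective,
        SchurMultiplier.toHopf_surjective G₁ G₂⟩).symm⟩

theorem schur_multiplier_of_direct_product (G₁ G₂ : Type*) [Group G₁] [Group G₂]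
    [Finite G₁] [Finite G₂] :
    Nonempty (SchurMultiplier (G₁ × G₂) ≃*
      SchurMultiplier G₁ × SchurMultiplier G₂ ×
        Multiplicative (TensorProduct ℤ (Additive (Abelianization G₁))
          (Additive (Abelianization G₂)))) :=
  schur_multiplier_of_direct_product_general G₁ G₂
end

section
/- If G is a group of order pⁿ for a prime p, then the order of its Schur multiplier M(G) divides p^{n(n-1)/2}. -/
/-!
By Hopf's formula, `M(G) = (R ⊓ [F, F]) / [F, R]` is the subgroup `M ⊓ [H, H]` of
`H = F / [F, R]`, where `M = R / [F, R]` is central of index `|G| = pⁿ`. Green's bound for such a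
central `M` goes by induction on `n`: choose `z` whose image in `H / M` is central of order `p`.
Then `g ↦ ⁅z, g⁆` is a homomorphism into `M ⊓ [H, H]` that kills `M ⊔ ⟨z⟩`, a subgroup of index
`pⁿ⁻¹`, so its image `T` has order dividing `pⁿ⁻¹`; in `H / T` the image of `M ⊔ ⟨z⟩` is central
of index `pⁿ⁻¹`. Hence `|M ⊓ [H, H]|` divides `pⁿ⁻¹ · p^((n-1)(n-2)/2) = p^(n(n-1)/2)`.
-/

open Subgroup QuotientGroup
open scoped commutatorElement

namespace Subgroup

variable {G G' : Type*} [Group G] [Group G']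

theorem normal_of_le_center_s2 {N : Subgroup G} (hN : N ≤ center G) : N.Normal :=
  ⟨fun n hn g => by rwa [mem_center_iff.mp (hN hn) g, mul_inv_cancel_right]⟩

theorem map_le_center_of_surjective {N : Subgroup G} (hN : N ≤ center G) {f : G →* G'}
    (hf : Function.Surjective f) : N.map f ≤ center G' := by
  rintro _ ⟨n, hn, rfl⟩
  refine mem_center_iff.mpr fun g' => ?_
  obtain ⟨g, rfl⟩ := hf g'
  rw [← map_mul, ← map_mul, mem_center_iff.mp (hN hn) g]

theorem map_commutator_of_surjective {f : G →* G'} (hf : Function.Surjective f) :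
    (_root_.commutator G).map f = _root_.commutator G' := by
  rw [map_commutator_eq, f.range_eq_top.mpr hf, _root_.commutator_def]

theorem map_inf_of_ker_le {A B : Subgroup G} {f : G →* G'} (h : f.ker ≤ B) :
    (A ⊓ B).map f = A.map f ⊓ B.map f := by
  refine le_antisymm (map_inf_le A B f) ?_
  rintro _ ⟨⟨a, ha, rfl⟩, ⟨b, hb, hba⟩⟩
  have hab : b⁻¹ * a ∈ B := h (by rw [f.mem_ker, map_mul, map_inv, hba, inv_mul_cancel])
  refine ⟨a, ⟨ha, ?_⟩, rfl⟩
  simpa using B.mul_mem hb hab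

theorem card_eq_card_map_mk'_mul_card {N K : Subgroup G} [N.Normal] (h : N ≤ K) :
    Nat.card K = Nat.card (K.map (mk' N)) * Nat.card N := by
  rw [← relIndex_ker, ker_mk', ← relIndex_bot_left, ← relIndex_bot_left]
  exact (relIndex_mul_relIndex _ _ _ bot_le h).symm.trans (mul_comm _ _)

end Subgroup

theorem QuotientGroup.mk_mem_center_iff {G : Type*} [Group G] {N : Subgroup G} [N.Normal]
    {z : G} : (z : G ⧸ N) ∈ center (G ⧸ N) ↔ ∀ g, ⁅z, g⁆ ∈ N :=
  (SetLike.ext_iff.mp (Subgroup.upperCentralSeriesStep_eq_comap_center N) z).symm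

section GreenBound

variable {G : Type*} [Group G]

def commutatorElementHom (z : G) (hz : ∀ g, ⁅z, g⁆ ∈ center G) : G →* G where
  toFun g := ⁅z, g⁆
  map_one' := commutatorElement_one_right z
  map_mul' a b := by
    have : ⁅z, a * b⁆ = ⁅z, a⁆ * (a * ⁅z, b⁆ * a⁻¹) := by group
    rw [this, mem_center_iff.mp (hz b) a, mul_inv_cancel_right]

theorem exists_commutatorElement_mem_index_sup_zpowers {p n : ℕ} [hp : Fact p.Prime]
    {M : Subgroup G} [M.Normal] (hidx : M.index = p ^ (n + 1)) :
    ∃ z : G, (∀ g, ⁅z, g⁆ ∈ M) ∧ (M ⊔ zpowers z).index = p ^ n := by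
  have hQ : Nat.card (G ⧸ M) = p ^ (n + 1) := hidx
  have : Finite (G ⧸ M) := Nat.finite_of_card_ne_zero (hQ ▸ (pow_pos hp.out.pos _).ne')
  obtain ⟨k, hk, hcard⟩ := IsPGroup.card_center_eq_prime_pow hQ n.succ_pos
  obtain ⟨c, hc⟩ := exists_prime_orderOf_dvd_card' (G := center (G ⧸ M)) p
    (hcard ▸ dvd_pow_self p hk.ne')
  obtain ⟨z, hz⟩ := QuotientGroup.mk_surjective (c : G ⧸ M)
  refine ⟨z, mk_mem_center_iff.mp (hz ▸ c.2), ?_⟩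
  have hZ : M ⊔ zpowers z = (zpowers (c : G ⧸ M)).comap (mk' M) := by
    rw [← hz, ← mk'_apply, ← MonoidHom.map_zpowers, comap_map_eq, ker_mk', sup_comm]
  have hmul := (zpowers (c : G ⧸ M)).index_mul_card
  rw [Nat.card_zpowers, orderOf_coe, hc, hQ, pow_succ,
    ← index_comap_of_surjective _ (mk'_surjective M), ← hZ] at hmul
  exact Nat.eq_of_mul_eq_mul_right hp.out.pos hmul

theorem exists_quotient_card_inf_commutator_dvd {p n : ℕ} [Fact p.Prime]
    {M : Subgroup G} (hM : M ≤ center G) (hidx : M.index = p ^ (n + 1)) :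
    ∃ (T : Subgroup G) (_ : T.Normal) (M' : Subgroup (G ⧸ T)),
      M' ≤ center (G ⧸ T) ∧ M'.index = p ^ n ∧
      Nat.card ↥(M ⊓ commutator G) ∣ Nat.card ↥(M' ⊓ commutator (G ⧸ T)) * p ^ n := by
  have := normal_of_le_center_s2 hM
  obtain ⟨z, hzM, hZ⟩ := exists_commutatorElement_mem_index_sup_zpowers hidx
  set φ := commutatorElementHom z fun g => hM (hzM g)
  have hTM : φ.range ≤ M := by
    rintro _ ⟨g, rfl⟩
    exact hzM g
  have hTcomm : φ.range ≤ commutator G := by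
    rintro _ ⟨g, rfl⟩
    exact commutator_mem_commutator (mem_top _) (mem_top _)
  have := normal_of_le_center_s2 (hTM.trans hM)
  have hZker : M ⊔ zpowers z ≤ φ.ker := by
    refine sup_le (fun m hm => ?_) (zpowers_le.mpr (commutatorElement_self z))
    exact commutatorElement_eq_one_iff_commute.mpr (mem_center_iff.mp (hM hm) z)
  refine ⟨φ.range, inferInstance, (M ⊔ zpowers z).map (mk' φ.range), ?_, ?_, ?_⟩
  · rw [Subgroup.map_sup, MonoidHom.map_zpowers]
    exact sup_le (map_le_center_of_surjective hM (mk'_surjective _))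
      (zpowers_le.mpr (mk_mem_center_iff.mpr fun g => ⟨g, rfl⟩))
  · rw [index_map_eq _ (mk'_surjective _) (by rw [ker_mk']; exact hTM.trans le_sup_left), hZ]
  · rw [card_eq_card_map_mk'_mul_card (le_inf hTM hTcomm)]
    refine mul_dvd_mul (card_dvd_of_le ?_) ?_
    · rw [map_inf_of_ker_le (by rwa [ker_mk']), map_commutator_of_surjective (mk'_surjective _)]
      exact inf_le_inf_right _ (map_mono le_sup_left)
    · rw [← index_ker, ← hZ]
      exact index_dvd_of_le hZker

theorem card_inf_commutator_dvd_of_le_center {p : ℕ} [Fact p.Prime] (n : ℕ) {M : Subgroup G}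
    (hM : M ≤ center G) (hidx : M.index = p ^ n) :
    Nat.card ↥(M ⊓ commutator G) ∣ p ^ n.choose 2 := by
  induction n generalizing G with
  | zero =>
    rw [pow_zero, index_eq_one] at hidx
    have : commutator G = ⊥ :=
      (commutator_eq_bot_iff_center_eq_top G).mpr (top_le_iff.mp (hidx ▸ hM))
    simp [this]
  | succ n ih =>
    obtain ⟨T, _, M', hM', hidx', hdvd⟩ := exists_quotient_card_inf_commutator_dvd hM hidx
    rw [Nat.choose_succ_succ', Nat.choose_one_right, pow_add, mul_comm]
    exact hdvd.trans (mul_dvd_mul_right (ih hM' hidx') _)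

end GreenBound

section Hopf

variable {F : Type*} [Group F] (R : Subgroup F) [R.Normal]

theorem map_mk'_commutator_top_le_center :
    R.map (mk' ⁅(⊤ : Subgroup F), R⁆) ≤ center (F ⧸ ⁅(⊤ : Subgroup F), R⁆) := by
  rintro _ ⟨r, hr, rfl⟩
  refine mk_mem_center_iff.mpr fun g => ?_
  rw [← commutatorElement_inv]
  exact inv_mem (commutator_mem_commutator (mem_top g) hr)

theorem relIndex_commutator_top_inf_commutator_eq_card :
    ⁅(⊤ : Subgroup F), R⁆.relIndex (R ⊓ commutator F) =
      Nat.card ↥(R.map (mk' ⁅(⊤ : Subgroup F), R⁆) ⊓ commutator (F ⧸ ⁅(⊤ : Subgroup F), R⁆)) := by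
  have h := relIndex_ker (K := R ⊓ commutator F) (mk' ⁅(⊤ : Subgroup F), R⁆)
  rw [ker_mk'] at h
  rw [h, map_inf_of_ker_le (by rw [ker_mk']; exact commutator_mono le_rfl le_top),
    map_commutator_of_surjective (mk'_surjective _)]

end Hopf

theorem presentation_surjective (G : Type*) [Group G] : Function.Surjective (presentation G) :=
  fun g => ⟨FreeGroup.of g, FreeGroup.lift_apply_of⟩

theorem card_schur_multiplier_dvd_of_p_group (p n : ℕ) (hp : p.Prime)
    (G : Type*) [Group G] (hG : Nat.card G = p ^ n) :
    Nat.card (SchurMultiplier G) ∣ p ^ (n * (n - 1) / 2) := by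
  have := Fact.mk hp
  set R := (presentation G).ker
  have hR : R.index = p ^ n := by
    rw [index_ker, (presentation G).range_eq_top.mpr (presentation_surjective G), card_top, hG]
  have hM : (R.map (mk' ⁅(⊤ : Subgroup (FreeGroup G)), R⁆)).index = p ^ n := by
    rw [index_map_eq _ (mk'_surjective _) (by rw [ker_mk']; exact commutator_le_right ⊤ R), hR]
  rw [← Nat.choose_two_right]
  change ⁅(⊤ : Subgroup _), R⁆.relIndex (R ⊓ commutator _) ∣ _
  rw [relIndex_commutator_top_inf_commutator_eq_card]
  exact card_inf_commutator_dvd_of_le_center n (map_mk'_commutator_top_le_center R) hM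
end
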